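/- Let p be prime and a, m, n ∈ {1,...,p-1} with not both m = p-1 and n = p-1. Then the sum over k from 0 to p-1 of (a+k)^m · k^n is congruent mod p to -a^(m+n-p+1) · C(m, p-1-n), where the term is interpreted as 0 when m+n < p-1 (since C(m,p-1-n) = 0 in that case). -/

import Mathlib

/-!
Expand `(a + x) ^ m` binomially and swap the sums: the power sum `∑ x, x ^ i` over a field with
`q` elements vanishes unless `q - 1 ∣ i`, when it is `-1` (for `i ≠ 0`). Since
`0 < j + n < 2 (q - 1)`, only the index `j = q - 1 - n` survives.
-/

open Finset

theorem ZMod.sum_range_natCast {n : ℕ} [NeZero n] {M : Type*} [AddCommMonoid M]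
    (f : ZMod n → M) : ∑ k ∈ range n, f k = ∑ x : ZMod n, f x :=
  sum_nbij' (↑) ZMod.val (by simp) (by simp [ZMod.val_lt])
    (fun _ hk ↦ ZMod.val_cast_of_lt (mem_range.1 hk)) (fun x _ ↦ ZMod.natCast_zmod_val x)
    (fun _ _ ↦ rfl)

namespace FiniteField

variable {K : Type*} [Field K] [Fintype K]

theorem sum_pow_of_ne_zero {i : ℕ} (hi : i ≠ 0) :
    ∑ x : K, x ^ i = if Fintype.card K - 1 ∣ i then -1 else 0 := by
  classical
  calc ∑ x : K, x ^ i = ∑ x ∈ univ with x ≠ 0, x ^ i :=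
        (sum_filter_of_ne fun x _ hx ↦ by rintro rfl; exact hx (zero_pow hi)).symm
    _ = ∑ x : {x : K // x ≠ 0}, (x : K) ^ i := sum_subtype _ (by simp) _
    _ = ∑ u : Kˣ, (u : K) ^ i := (Fintype.sum_equiv unitsEquivNeZero _ _ fun _ ↦ rfl).symm
    _ = _ := sum_pow_units K i

/-- The truncated exponent is harmless: when `m + n + 1 < q` the binomial coefficient vanishes. -/
theorem sum_add_pow_mul_pow (a : K) {m n : ℕ} (hm : m ≤ Fintype.card K - 1)
    (hn₀ : n ≠ 0) (hn : n ≤ Fintype.card K - 1)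
    (hmn : ¬(m = Fintype.card K - 1 ∧ n = Fintype.card K - 1)) :
    ∑ x : K, (a + x) ^ m * x ^ n =
      -a ^ (m + n + 1 - Fintype.card K) * m.choose (Fintype.card K - 1 - n) := by
  set q := Fintype.card K
  have hdvd {j : ℕ} (hj : j ≤ m) : q - 1 ∣ j + n ↔ j = q - 1 - n :=
    ⟨fun h ↦ by have := Nat.eq_of_dvd_of_lt_two_mul (by omega) h (by omega); omega,
      fun h ↦ ⟨1, by omega⟩⟩
  calc ∑ x : K, (a + x) ^ m * x ^ n
      = ∑ j ∈ range (m + 1), a ^ (m - j) * m.choose j * ∑ x : K, x ^ (j + n) := by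
        simp_rw [mul_sum, add_comm a, add_pow, sum_mul]
        rw [sum_comm]
        refine sum_congr rfl fun j _ ↦ sum_congr rfl fun x _ ↦ by ring
    _ = ∑ j ∈ range (m + 1), if j = q - 1 - n then -(a ^ (m - j) * m.choose j) else 0 := by
        refine sum_congr rfl fun j hj ↦ ?_
        rw [sum_pow_of_ne_zero (by omega),
          if_congr (hdvd (Nat.lt_succ_iff.1 (mem_range.1 hj))) rfl rfl]
        split_ifs <;> ring
    _ = _ := by
        rw [sum_ite_eq']
        split_ifs with h
        · rw [show m - (q - 1 - n) = m + n + 1 - q by omega, neg_mul]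
        · rw [Nat.choose_eq_zero_of_lt (by rw [mem_range] at h; omega)]
          simp

end FiniteField

theorem sum_product_shift_k_general (p a m n : ℕ) [Fact p.Prime]
    (hm : 1 ≤ m ∧ m ≤ p - 1) (hn : 1 ≤ n ∧ n ≤ p - 1)
    (h : ¬(m = p - 1 ∧ n = p - 1)) :
    (∑ k ∈ Finset.range p, ((a : ZMod p) + (k : ZMod p)) ^ m * (k : ZMod p) ^ n) =
      -(a : ZMod p) ^ ((m : ℤ) + (n : ℤ) - (p : ℤ) + 1) * (m.choose (p - 1 - n) : ZMod p) := by
  rw [ZMod.sum_range_natCast fun x ↦ ((a : ZMod p) + x) ^ m * x ^ n,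
    FiniteField.sum_add_pow_mul_pow _ (by rw [ZMod.card]; omega) (by omega)
      (by rw [ZMod.card]; omega) (by rwa [ZMod.card]), ZMod.card]
  rcases le_or_gt p (m + n + 1) with hle | hlt
  · rw [show (m : ℤ) + n - p + 1 = ((m + n + 1 - p : ℕ) : ℤ) by omega, zpow_natCast]
  · simp [Nat.choose_eq_zero_of_lt (show m < p - 1 - n by omega)]

theorem sum_product_shift_k (p a m n : ℕ) [Fact p.Prime]
    (ha : 1 ≤ a ∧ a ≤ p - 1) (hm : 1 ≤ m ∧ m ≤ p - 1) (hn : 1 ≤ n ∧ n ≤ p - 1)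
    (h : ¬(m = p - 1 ∧ n = p - 1)) :
    (∑ k ∈ Finset.range p, ((a : ZMod p) + (k : ZMod p)) ^ m * (k : ZMod p) ^ n) =
      -(a : ZMod p) ^ ((m : ℤ) + (n : ℤ) - (p : ℤ) + 1) * (m.choose (p - 1 - n) : ZMod p) :=
  sum_product_shift_k_general p a m n hm hn h
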